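/- arXiv:1705.03187 — 4 statements merged into one kernel-verified Lean document; each statement's English description precedes it below -/
import Mathlib

section
/- If e₁ = (1,0,0,0), e₂ = (0,a,b,c), e₃ = (0,x,y,z) in ℝ⁴_2 satisfy -a² + b² + c² = -1, -x² + y² + z² = 0 with x ≠ 0, and -ax + by + cz = 0, then a contradiction follows; more precisely, these equations imply ((bz - cy)/x)² = -1, which is impossible over ℝ. -/
theorem stmt5 (a b c x y z : ℝ)
    (h1 : -a ^ 2 + b ^ 2 + c ^ 2 = -1)
    (h2 : -x ^ 2 + y ^ 2 + z ^ 2 = 0)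
    (hx : x ≠ 0)
    (h3 : -a * x + b * y + c * z = 0) :
    ((b * z - c * y) / x) ^ 2 = -1 := by
  field_simp
  linear_combination x^2 * h1 + (b^2 + c^2) * h2 - (a * x + b * y + c * z) * h3
end

section
/- Suppose a C² function C : I × ℝ → ℝ and smooth curves γ, x : I → ℝⁿ satisfy, for all (s,t) ∈ I × ℝ, the identity t·C(s,t)·γ'(s) + C(s,t)·x'(s) - εη t·γ(s) + a(s)·γ(s) = γ''(s)t + x''(s), where ε, η ∈ {±1, 0} are constants and a : I → ℝ. If γ'(s) and x'(s) are linearly independent for every s ∈ I, then ∂C/∂t ≡ 0, i.e., C(s,t) does not depend on t. -/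
theorem stmt12 (n : ℕ) (I : Set ℝ) (hI : IsOpen I)
    (C : ℝ → ℝ → ℝ) (hC : ContDiff ℝ 2 (fun q : ℝ × ℝ => C q.1 q.2))
    (γ x : ℝ → Fin n → ℝ) (hγ : ContDiff ℝ (⊤ : ℕ∞) γ) (hx : ContDiff ℝ (⊤ : ℕ∞) x)
    (a : ℝ → ℝ) (ε η : ℝ)
    (hε : ε = 1 ∨ ε = -1 ∨ ε = 0) (hη : η = 1 ∨ η = -1 ∨ η = 0)
    (hid : ∀ s ∈ I, ∀ t : ℝ,
      (t * C s t) • deriv γ s + C s t • deriv x s - (ε * η * t) • γ s + a s • γ s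
        = t • deriv (deriv γ) s + deriv (deriv x) s)
    (hind : ∀ s ∈ I, LinearIndependent ℝ ![deriv γ s, deriv x s]) :
    ∀ s ∈ I, ∀ t : ℝ, deriv (fun u => C s u) t = 0 := by
  intro s hs t
  have key : ∀ u : ℝ, (u * C s u - u * C s 1) • deriv γ s
      + (C s u - C s 0 - u * (C s 1 - C s 0)) • deriv x s = 0 := by
    intro u
    have e0 := hid s hs 0
    have e1 := hid s hs 1
    have eu := hid s hs u
    have comb : ((u * C s u) • deriv γ s + C s u • deriv x s - (ε * η * u) • γ s + a s • γ s)
        - u • (((1 : ℝ) * C s 1) • deriv γ s + C s 1 • deriv x s - (ε * η * 1) • γ s + a s • γ s)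
        + (u - 1) • (((0 : ℝ) * C s 0) • deriv γ s + C s 0 • deriv x s - (ε * η * 0) • γ s + a s • γ s)
        = (u • deriv (deriv γ) s + deriv (deriv x) s)
        - u • ((1 : ℝ) • deriv (deriv γ) s + deriv (deriv x) s)
        + (u - 1) • ((0 : ℝ) • deriv (deriv γ) s + deriv (deriv x) s) := by
      rw [e0, e1, eu]
    have rhs0 : (u • deriv (deriv γ) s + deriv (deriv x) s)
        - u • ((1 : ℝ) • deriv (deriv γ) s + deriv (deriv x) s)
        + (u - 1) • ((0 : ℝ) • deriv (deriv γ) s + deriv (deriv x) s)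
        = (u - 1) • deriv (deriv x) s + (1 - u) • deriv (deriv x) s := by module
    rw [rhs0] at comb
    have : (u - 1) • deriv (deriv x) s + (1 - u) • deriv (deriv x) s = (0 : Fin n → ℝ) := by
      module
    rw [this] at comb
    linear_combination (norm := module) comb
  have pair := LinearIndependent.pair_iff.mp (hind s hs)
  have c10 : C s 1 = C s 0 := by
    obtain ⟨h1, h2⟩ := pair _ _ (key 2)
    linarith
  have hconst : ∀ u : ℝ, C s u = C s 0 := by
    intro u
    have h := (pair _ _ (key u)).2
    rw [c10] at h
    linarith
  have : (fun u => C s u) = fun _ => C s 0 := funext hconst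
  rw [this, deriv_const]
end

section
/- Let γ, x : I → ℝⁿ_p be smooth with ⟨γ,γ⟩_p ≡ ε = ±1, ⟨γ',γ'⟩_p ≡ 0 (η = 0), ⟨x',x'⟩_p ≡ δ = ±1, ⟨γ,x'⟩_p ≡ 0, and suppose the identity (d/ds⟨γ',x'⟩_p)·t·(γ't + x') + ε⟨γ,x''⟩_p(2⟨γ',x'⟩_p t + δ)γ = (2⟨γ',x'⟩_p t + δ)(γ''t + x'') holds for all (s,t). Then ⟨γ'(s), x'(s)⟩_p is constant on I. -/
/-- The pseudo-Euclidean bilinear form of index `p` on `ℝⁿ`: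
`⟪x,y⟫_p = -∑_{i<p} x_i y_i + ∑_{i≥p} x_i y_i`. -/
noncomputable def pform (n p : ℕ) (x y : Fin n → ℝ) : ℝ :=
  ∑ i : Fin n, (if (i : ℕ) < p then (-1 : ℝ) else 1) * x i * y i

lemma pform_add_left (n p : ℕ) (u v w : Fin n → ℝ) :
    pform n p (u + v) w = pform n p u w + pform n p v w := by
  simp only [pform, Pi.add_apply, ← Finset.sum_add_distrib]
  exact Finset.sum_congr rfl fun i _ => by ring

lemma pform_smul_left (n p : ℕ) (r : ℝ) (u w : Fin n → ℝ) :
    pform n p (r • u) w = r * pform n p u w := by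
  simp only [pform, Pi.smul_apply, smul_eq_mul, Finset.mul_sum]
  exact Finset.sum_congr rfl fun i _ => by ring

lemma pform_contDiff (n p : ℕ) (f g : ℝ → Fin n → ℝ)
    (hf : ContDiff ℝ (⊤:ℕ∞) f) (hg : ContDiff ℝ (⊤:ℕ∞) g) :
    ContDiff ℝ (⊤:ℕ∞) (fun s => pform n p (f s) (g s)) := by
  unfold pform
  apply ContDiff.sum
  intro i _
  exact (contDiff_const.mul
    (((ContinuousLinearMap.proj i : (Fin n → ℝ) →L[ℝ] ℝ).contDiff).comp hf)).mul
    (((ContinuousLinearMap.proj i : (Fin n → ℝ) →L[ℝ] ℝ).contDiff).comp hg)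

theorem stmt17 (n p : ℕ) (a b : ℝ) (γ x : ℝ → Fin n → ℝ) (ε δ : ℝ)
    (hε : ε = 1 ∨ ε = -1) (hδ : δ = 1 ∨ δ = -1)
    (hγ : ContDiff ℝ (⊤ : ℕ∞) γ) (hx : ContDiff ℝ (⊤ : ℕ∞) x)
    (hγγ : ∀ s ∈ Set.Ioo a b, pform n p (γ s) (γ s) = ε)
    (hη : ∀ s ∈ Set.Ioo a b, pform n p (deriv γ s) (deriv γ s) = 0)
    (hδ' : ∀ s ∈ Set.Ioo a b, pform n p (deriv x s) (deriv x s) = δ)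
    (hg12 : ∀ s ∈ Set.Ioo a b, pform n p (γ s) (deriv x s) = 0)
    (hid : ∀ s ∈ Set.Ioo a b, ∀ t : ℝ,
      (deriv (fun u => pform n p (deriv γ u) (deriv x u)) s * t) •
          (t • deriv γ s + deriv x s)
        + (ε * pform n p (γ s) (deriv (deriv x) s)
            * (2 * pform n p (deriv γ s) (deriv x s) * t + δ)) • γ s
        = (2 * pform n p (deriv γ s) (deriv x s) * t + δ) •
            (t • deriv (deriv γ) s + deriv (deriv x) s)) :
    ∃ c : ℝ, ∀ s ∈ Set.Ioo a b, pform n p (deriv γ s) (deriv x s) = c := by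

  have hδne : δ ≠ 0 := by rcases hδ with h | h <;> rw [h] <;> norm_num
  have key : ∀ s ∈ Set.Ioo a b,
      pform n p (deriv γ s) (deriv x s)
        * deriv (fun u => pform n p (deriv γ u) (deriv x u)) s = 0 := by
    intro s hs
    have e0 := congrArg (fun v => pform n p v (deriv x s)) (hid s hs 0)
    have e1 := congrArg (fun v => pform n p v (deriv x s)) (hid s hs 1)
    have e2 := congrArg (fun v => pform n p v (deriv x s)) (hid s hs (-1))
    simp only [pform_add_left, pform_smul_left] at e0 e1 e2
    rw [hδ' s hs, hg12 s hs] at e0 e1 e2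
    set A := pform n p (deriv γ s) (deriv x s) with hA
    set B := deriv (fun u => pform n p (deriv γ u) (deriv x u)) s with hB
    set P := pform n p (deriv (deriv γ) s) (deriv x s) with hP
    set R := pform n p (deriv (deriv x) s) (deriv x s) with hR
    have hR0 : R = 0 := by
      have h : δ * R = 0 := by linear_combination -e0
      exact (mul_eq_zero.mp h).resolve_left hδne
    have hPB : P = B := by
      have h : δ * (P - B) = 0 := by linear_combination (e2 - e1)/2 - 2*A*hR0
      have := (mul_eq_zero.mp h).resolve_left hδne
      linarith
    linear_combination -e1 - (2*A+δ)*hPB - (2*A+δ)*hR0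
  -- smoothness facts
  have hγ' : ContDiff ℝ (⊤:ℕ∞) (deriv γ) :=
    (contDiff_infty_iff_deriv.mp (hγ.of_le (by simp))).2
  have hx' : ContDiff ℝ (⊤:ℕ∞) (deriv x) :=
    (contDiff_infty_iff_deriv.mp (hx.of_le (by simp))).2
  have hF : ContDiff ℝ (⊤:ℕ∞) (fun u => pform n p (deriv γ u) (deriv x u)) :=
    pform_contDiff n p _ _ hγ' hx'
  have hFdiff : Differentiable ℝ (fun u => pform n p (deriv γ u) (deriv x u)) :=
    hF.differentiable (by simp)
  have hF'cont : Continuous (deriv (fun u => pform n p (deriv γ u) (deriv x u))) :=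
    (contDiff_infty_iff_deriv.mp hF).2.continuous
  have hzero : ∀ s ∈ Set.Ioo a b,
      deriv (fun u => pform n p (deriv γ u) (deriv x u)) s = 0 := by
    intro s hs
    by_contra hne
    have h1 : ∀ᶠ u in nhds s,
        deriv (fun u => pform n p (deriv γ u) (deriv x u)) u ≠ 0 :=
      hF'cont.continuousAt.eventually_ne hne
    have h2 : ∀ᶠ u in nhds s, u ∈ Set.Ioo a b := isOpen_Ioo.eventually_mem hs
    have h3 : (fun u => pform n p (deriv γ u) (deriv x u)) =ᶠ[nhds s] fun _ => 0 := by
      filter_upwards [h1, h2] with u hu1 hu2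
      exact (mul_eq_zero.mp (key u hu2)).resolve_right hu1
    have h4 := h3.deriv_eq
    rw [deriv_const] at h4
    exact hne h4
  rcases Set.eq_empty_or_nonempty (Set.Ioo a b) with he | ⟨s₀, hs₀⟩
  · exact ⟨0, fun s hs => by rw [he] at hs; exact absurd hs (Set.notMem_empty s)⟩
  · have main : ∀ u ∈ Set.Ioo a b, ∀ v ∈ Set.Ioo a b, u < v →
        pform n p (deriv γ u) (deriv x u) = pform n p (deriv γ v) (deriv x v) := by
      intro u hu v hv huv
      obtain ⟨c, hc, hc'⟩ := exists_hasDerivAt_eq_slope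
        (fun z => pform n p (deriv γ z) (deriv x z))
        (deriv (fun z => pform n p (deriv γ z) (deriv x z))) huv
        (hF.continuous.continuousOn) (fun z _ => (hFdiff z).hasDerivAt)
      have hcmem : c ∈ Set.Ioo a b := ⟨lt_trans hu.1 hc.1, lt_trans hc.2 hv.2⟩
      rw [hzero c hcmem] at hc'
      have hne : v - u ≠ 0 := sub_ne_zero.mpr (ne_of_gt huv)
      field_simp at hc'
      linarith
    refine ⟨pform n p (deriv γ s₀) (deriv x s₀), fun s hs => ?_⟩
    rcases lt_trichotomy s s₀ with h | h | h
    · exact main s hs s₀ hs₀ h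
    · rw [h]
    · exact (main s₀ hs₀ s hs h).symm
end

section
/- Let γ₀ ∈ ℝⁿ_p be a null vector and x : I → ℝⁿ_p a null curve (⟨x'(s),x'(s)⟩_p = 0 for all s) with ⟨γ₀, x'(s)⟩_p ≠ 0 for all s. Then the cylinder f(s,t) = γ₀ t + x(s) has non-degenerate induced metric with det g = -(⟨γ₀,x'(s)⟩_p)² < 0 (so S is timelike); moreover f_ss = x''(s), g₁₁ = 0 and g₂₂ = ⟨γ₀,γ₀⟩_p = 0, hence the mean curvature numerator g₁₁h₂₂ - 2g₁₂h₁₂ + g₂₂h₁₁ vanishes identically, i.e., f is minimal. -/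
lemma pform_symm (n p : ℕ) (x y : Fin n → ℝ) : pform n p x y = pform n p y x := by
  unfold pform; refine Finset.sum_congr rfl fun i _ => by ring

lemma deriv_smul_vec (c : Fin n → ℝ) (t : ℝ) :
    deriv (fun v : ℝ => v • c) t = c := by
  have : HasDerivAt (fun v : ℝ => v • c) ((1 : ℝ) • c) t :=
    (hasDerivAt_id t).smul_const c
  simpa using this.deriv

theorem stmt18 (n p : ℕ) (γ₀ : Fin n → ℝ) (x : ℝ → Fin n → ℝ)
    (hγ₀ : pform n p γ₀ γ₀ = 0) (hx : ContDiff ℝ (⊤ : ℕ∞) x)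
    (hnull : ∀ s : ℝ, pform n p (deriv x s) (deriv x s) = 0)
    (hne : ∀ s : ℝ, pform n p γ₀ (deriv x s) ≠ 0) :
    ∀ s t : ℝ,
      let f : ℝ → ℝ → Fin n → ℝ := fun u v => v • γ₀ + x u
      let fs := deriv (fun u => f u t) s
      let ft := deriv (fun v => f s v) t
      let fss := deriv (fun u => deriv (fun u' => f u' t) u) s
      let fst := deriv (fun v => deriv (fun u => f u v) s) t
      let ftt := deriv (fun v => deriv (fun v' => f s v') v) t
      pform n p fs fs = 0 ∧ pform n p ft ft = 0 ∧
      pform n p fs fs * pform n p ft ft - (pform n p fs ft) ^ 2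
        = -(pform n p γ₀ (deriv x s)) ^ 2 ∧
      pform n p fs fs * pform n p ft ft - (pform n p fs ft) ^ 2 < 0 ∧
      fss = deriv (deriv x) s ∧
      (pform n p fs fs) • ftt - (2 * pform n p fs ft) • fst + (pform n p ft ft) • fss
        = 0 := by
  intro s t f fs ft fss fst ftt
  have hdx : Differentiable ℝ x := hx.differentiable (by simp)
  have hfs : ∀ u, deriv (fun u' => f u' t) u = deriv x u := by
    intro u
    show deriv (fun u' => t • γ₀ + x u') u = deriv x u
    rw [deriv_const_add]
  have hftv : ∀ v, deriv (fun v' => f s v') v = γ₀ := by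
    intro v
    show deriv (fun v' => v' • γ₀ + x s) v = γ₀
    rw [deriv_add_const, deriv_smul_vec]
  have hfs' : fs = deriv x s := hfs s
  have hft' : ft = γ₀ := hftv t
  have hfss' : fss = deriv (deriv x) s := by
    show deriv (fun u => deriv (fun u' => f u' t) u) s = _
    simp only [hfs]
  have hfst' : fst = 0 := by
    show deriv (fun v => deriv (fun u => f u v) s) t = 0
    have : (fun v : ℝ => deriv (fun u => f u v) s) = fun _ => deriv x s := by
      funext v
      show deriv (fun u => v • γ₀ + x u) s = deriv x s
      rw [deriv_const_add]
    rw [this, deriv_const]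
  have hftt' : ftt = 0 := by
    show deriv (fun v => deriv (fun v' => f s v') v) t = 0
    simp only [hftv, deriv_const]
  have h1 : pform n p fs fs = 0 := by rw [hfs']; exact hnull s
  have h2 : pform n p ft ft = 0 := by rw [hft']; exact hγ₀
  have h3 : pform n p fs ft = pform n p γ₀ (deriv x s) := by
    rw [hfs', hft', pform_symm]
  refine ⟨h1, h2, ?_, ?_, hfss', ?_⟩
  · rw [h1, h2, h3]; ring
  · rw [h1, h2, h3]
    have := hne s
    nlinarith [sq_pos_of_ne_zero this]
  · rw [h1, h2, hftt', hfst']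
    simp
end
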